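/- arXiv:1904.09905 — 7 statements merged into one kernel-verified Lean document; each statement's English description precedes it below -/
import Mathlib

section
/- Let n ≥ 1, let α₁, …, αₙ ∈ (-1, ∞), set α = α₁ + ⋯ + αₙ, and let t > 0. Then the integral over the ordered simplex {0 < r₁ < r₂ < ⋯ < rₙ < t} of ∏_{i=1}^{n} (r_{i+1} - r_i)^{α_i} dr₁ ⋯ drₙ, with the convention r_{n+1} = t, equals (∏_{i=1}^{n} Γ(α_i + 1)) · t^{α+n} / Γ(α + n + 1). -/
/-!
Integrate out the last coordinate `x = rₙ` outermost. For fixed `x ∈ (0, t)` the remaining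
coordinates range over the simplex of size `x`, and the integrand factors as the
`(n - 1)`-dimensional integrand with upper endpoint `x`, times `(t - x) ^ αₙ`. By induction the
inner integral is `(∏ Γ(αᵢ + 1)) / Γ(s + 1) · x ^ s` with `s = α₁ + ⋯ + αₙ₋₁ + (n - 1)`, and the
outer integral `∫₀ᵗ x ^ s (t - x) ^ αₙ dx = B(s + 1, αₙ + 1) t ^ (s + αₙ + 1)` supplies the last
Gamma factor. Working with `ℝ≥0∞`-valued integrals, Tonelli needs only measurability, and the
induction starts at the zero-dimensional simplex.
-/

open MeasureTheory Real Set ENNReal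

lemma Fin.strictMono_snoc {α : Type*} [Preorder α] {n : ℕ} {q : Fin n → α} {x : α} :
    StrictMono (Fin.snoc q x : Fin (n + 1) → α) ↔ StrictMono q ∧ ∀ i, q i < x := by
  simp [← Fin.insertNth_last', Fin.strictMono_insertNth_iff, Fin.castSucc_lt_last]

lemma lintegral_eq_lintegral_lintegral_snoc {X : Type*} [MeasureSpace X]
    [SigmaFinite (volume : Measure X)] {n : ℕ} {f : (Fin (n + 1) → X) → ℝ≥0∞} (hf : Measurable f) :
    ∫⁻ r, f r = ∫⁻ x, ∫⁻ q, f (Fin.snoc q x) := by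
  have e := (volume_preserving_piFinSuccAbove (fun _ : Fin (n + 1) => X) (Fin.last n)).symm
  rw [← e.lintegral_comp_emb (MeasurableEquiv.measurableEmbedding _), Measure.volume_eq_prod]
  refine (lintegral_prod _ (hf.comp e.measurable).aemeasurable).trans ?_
  simp only [MeasurableEquiv.piFinSuccAbove_symm_apply, Fin.insertNthEquiv_last,
    Function.comp_apply]
  rfl

lemma lintegral_Ioo_zero_one_rpow_mul_rpow {p q : ℝ} (hp : -1 < p) (hq : -1 < q) :
    ∫⁻ x in Ioo 0 1, ENNReal.ofReal (x ^ p * (1 - x) ^ q) =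
      ENNReal.ofReal (ProbabilityTheory.beta (p + 1) (q + 1)) := by
  have hB := ProbabilityTheory.beta_pos (by linarith : 0 < p + 1) (by linarith : 0 < q + 1)
  have h := ProbabilityTheory.lintegral_betaPDF_eq_one (by linarith : 0 < p + 1)
    (by linarith : 0 < q + 1)
  simp_rw [ProbabilityTheory.lintegral_betaPDF, add_sub_cancel_right, mul_assoc,
    ENNReal.ofReal_mul (one_div_pos.2 hB).le] at h
  rw [lintegral_const_mul' _ _ ofReal_ne_top, mul_comm] at h
  rw [ENNReal.eq_inv_of_mul_eq_one_left h, ← ENNReal.ofReal_inv_of_pos (one_div_pos.2 hB),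
    one_div, inv_inv]

lemma lintegral_Ioo_rpow_mul_rpow {p q t : ℝ} (hp : -1 < p) (hq : -1 < q) (ht : 0 < t) :
    ∫⁻ x in Ioo 0 t, ENNReal.ofReal (x ^ p * (t - x) ^ q) =
      ENNReal.ofReal (ProbabilityTheory.beta (p + 1) (q + 1) * t ^ (p + q + 1)) := by
  have himage : (t * ·) '' Ioo 0 1 = Ioo 0 t := by
    rw [image_mul_left_Ioo ht, mul_zero, mul_one]
  have hderiv (x : ℝ) : HasDerivWithinAt (t * ·) t (Ioo 0 1) x := by
    simpa using ((hasDerivAt_id' x).const_mul t).hasDerivWithinAt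
  have hscale : ∀ x ∈ Ioo (0 : ℝ) 1,
      ENNReal.ofReal |t| * ENNReal.ofReal ((t * x) ^ p * (t - t * x) ^ q) =
        ENNReal.ofReal (t ^ (p + q + 1)) * ENNReal.ofReal (x ^ p * (1 - x) ^ q) := by
    rintro x ⟨hx0, hx1⟩
    rw [← ENNReal.ofReal_mul (abs_nonneg t), ← ENNReal.ofReal_mul (by positivity), abs_of_pos ht,
      mul_rpow ht.le hx0.le, show t - t * x = t * (1 - x) by ring, mul_rpow ht.le (by linarith),
      rpow_add ht, rpow_add ht, Real.rpow_one]
    ring_nf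
  rw [← himage, lintegral_image_eq_lintegral_abs_deriv_mul measurableSet_Ioo
      (fun x _ => hderiv x) (mul_right_injective₀ ht.ne').injOn,
    setLIntegral_congr_fun measurableSet_Ioo hscale, lintegral_const_mul' _ _ ofReal_ne_top,
    lintegral_Ioo_zero_one_rpow_mul_rpow hp hq, ← ENNReal.ofReal_mul (by positivity), mul_comm]

lemma neg_natCast_le_sum_of_neg_one_lt {n : ℕ} {α : Fin n → ℝ} (hα : ∀ i, -1 < α i) :
    -(n : ℝ) ≤ ∑ i, α i := by
  simpa using Finset.sum_le_sum fun i (_ : i ∈ Finset.univ) => (hα i).le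

def orderedSimplex (n : ℕ) (t : ℝ) : Set (Fin n → ℝ) :=
  {r | (∀ i, 0 < r i) ∧ StrictMono r ∧ ∀ i, r i < t}

lemma measurableSet_orderedSimplex (n : ℕ) (t : ℝ) : MeasurableSet (orderedSimplex n t) := by
  simp only [orderedSimplex, StrictMono, ofPred_and, ofPred_forall]
  measurability

lemma orderedSimplex_zero (t : ℝ) : orderedSimplex 0 t = univ := by
  simp [orderedSimplex, Subsingleton.strictMono]

lemma snoc_mem_orderedSimplex {n : ℕ} {t x : ℝ} {q : Fin n → ℝ} :
    Fin.snoc q x ∈ orderedSimplex (n + 1) t ↔ x ∈ Ioo 0 t ∧ q ∈ orderedSimplex n x := by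
  simp only [orderedSimplex, mem_ofPred_eq, mem_Ioo, Fin.forall_fin_succ', Fin.strictMono_snoc,
    Fin.snoc_castSucc, Fin.snoc_last]
  constructor
  · rintro ⟨⟨hq0, hx0⟩, ⟨hq, hqx⟩, -, hxt⟩
    exact ⟨⟨hx0, hxt⟩, hq0, hq, hqx⟩
  · rintro ⟨⟨hx0, hxt⟩, hq0, hq, hqx⟩
    exact ⟨⟨hq0, hx0⟩, ⟨hq, hqx⟩, fun i => (hqx i).trans hxt, hxt⟩

lemma setLIntegral_orderedSimplex_succ {n : ℕ} {t : ℝ} {f : (Fin (n + 1) → ℝ) → ℝ≥0∞}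
    (hf : Measurable f) :
    ∫⁻ r in orderedSimplex (n + 1) t, f r =
      ∫⁻ x in Ioo 0 t, ∫⁻ q in orderedSimplex n x, f (Fin.snoc q x) := by
  classical
  rw [← lintegral_indicator (measurableSet_orderedSimplex _ _),
    lintegral_eq_lintegral_lintegral_snoc (hf.indicator (measurableSet_orderedSimplex _ _)),
    ← lintegral_indicator measurableSet_Ioo]
  refine lintegral_congr fun x => ?_
  by_cases hx : x ∈ Ioo 0 t
  · rw [indicator_of_mem hx, ← lintegral_indicator (measurableSet_orderedSimplex _ _)]
    refine lintegral_congr fun q => ?_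
    simp only [indicator_apply, snoc_mem_orderedSimplex, hx, true_and]
  · simp [snoc_mem_orderedSimplex, hx]

noncomputable def gapProduct {n : ℕ} (α : Fin n → ℝ) (t : ℝ) (r : Fin n → ℝ) : ℝ :=
  ∏ i : Fin n, ((if h : (i : ℕ) + 1 < n then r ⟨(i : ℕ) + 1, h⟩ else t) - r i) ^ α i

lemma measurable_gapProduct {n : ℕ} (α : Fin n → ℝ) (t : ℝ) : Measurable (gapProduct α t) := by
  refine Finset.measurable_prod _ fun i _ => ?_
  split_ifs <;> fun_prop

lemma gapProduct_nonneg {n : ℕ} (α : Fin n → ℝ) {t : ℝ} {r : Fin n → ℝ}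
    (hr : r ∈ orderedSimplex n t) : 0 ≤ gapProduct α t r := by
  obtain ⟨-, hmono, hlt⟩ := hr
  refine Finset.prod_nonneg fun i _ => rpow_nonneg (sub_nonneg.2 ?_) _
  split_ifs with h
  · exact (hmono (Fin.lt_def.2 (Nat.lt_succ_self _))).le
  · exact (hlt i).le

lemma gapProduct_snoc {n : ℕ} (α : Fin (n + 1) → ℝ) (t x : ℝ) (q : Fin n → ℝ) :
    gapProduct α t (Fin.snoc q x) = gapProduct (Fin.init α) x q * (t - x) ^ α (Fin.last n) := by
  rw [gapProduct, Fin.prod_univ_castSucc]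
  congr 1
  · refine Finset.prod_congr rfl fun j _ => ?_
    by_cases h : (j : ℕ) + 1 < n <;> simp [h, Fin.init, Fin.snoc]
  · simp

theorem lintegral_gapProduct_orderedSimplex (n : ℕ) (α : Fin n → ℝ) (hα : ∀ i, -1 < α i)
    {t : ℝ} (ht : 0 < t) :
    ∫⁻ r in orderedSimplex n t, ENNReal.ofReal (gapProduct α t r) =
      ENNReal.ofReal ((∏ i, Real.Gamma (α i + 1)) * t ^ (∑ i, α i + n) /
        Real.Gamma (∑ i, α i + n + 1)) := by
  induction n generalizing t with
  | zero => simp [orderedSimplex_zero, gapProduct, volume_pi]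
  | succ n ih =>
    have hs : 0 ≤ ∑ i, Fin.init α i + n := by
      linarith [neg_natCast_le_sum_of_neg_one_lt (α := Fin.init α) fun i => hα _]
    have hinner : ∀ x ∈ Ioo 0 t,
        ∫⁻ q in orderedSimplex n x, ENNReal.ofReal (gapProduct α t (Fin.snoc q x)) =
          ENNReal.ofReal ((∏ i, Real.Gamma (Fin.init α i + 1)) /
              Real.Gamma (∑ i, Fin.init α i + n + 1)) *
            ENNReal.ofReal (x ^ (∑ i, Fin.init α i + n) * (t - x) ^ α (Fin.last n)) := by
      rintro x ⟨hx0, hxt⟩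
      have hxa : 0 ≤ (t - x) ^ α (Fin.last n) := rpow_nonneg (by linarith) _
      simp only [gapProduct_snoc, ENNReal.ofReal_mul' hxa]
      rw [lintegral_mul_const' _ _ ofReal_ne_top, ih (Fin.init α) (fun i => hα _) hx0,
        ← mul_assoc, ← ENNReal.ofReal_mul' (rpow_nonneg hx0.le _)]
      congr 2
      ring
    have hβ := ProbabilityTheory.beta_pos (by linarith : 0 < ∑ i, Fin.init α i + n + 1)
      (by linarith [hα (Fin.last n)] : 0 < α (Fin.last n) + 1)
    have hΓ := (Real.Gamma_pos_of_pos (by linarith : 0 < ∑ i, Fin.init α i + n + 1)).ne'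
    rw [setLIntegral_orderedSimplex_succ (measurable_gapProduct _ _).ennreal_ofReal,
      setLIntegral_congr_fun measurableSet_Ioo hinner, lintegral_const_mul' _ _ ofReal_ne_top,
      lintegral_Ioo_rpow_mul_rpow (by linarith) (hα _) ht,
      ← ENNReal.ofReal_mul' (mul_pos hβ (rpow_pos_of_pos ht _)).le]
    congr 1
    simp only [Fin.prod_univ_castSucc, Fin.sum_univ_castSucc, ProbabilityTheory.beta,
      Fin.init] at hΓ ⊢
    push_cast
    field_simp
    ring_nf

theorem stmt_1_general (n : ℕ) (α : Fin n → ℝ) (hα : ∀ i, -1 < α i)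
    (t : ℝ) (ht : 0 < t) :
    (∫ r : Fin n → ℝ in
        {r | (∀ i, 0 < r i) ∧ StrictMono r ∧ ∀ i, r i < t},
        ∏ i : Fin n,
          ((if h : (i : ℕ) + 1 < n then r ⟨(i : ℕ) + 1, h⟩ else t) - r i) ^ α i) =
      (∏ i : Fin n, Real.Gamma (α i + 1)) * t ^ (∑ i, α i + n) /
        Real.Gamma (∑ i, α i + n + 1) := by
  have hsum := neg_natCast_le_sum_of_neg_one_lt hα
  have hRHS : 0 ≤ (∏ i : Fin n, Real.Gamma (α i + 1)) * t ^ (∑ i, α i + n) /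
      Real.Gamma (∑ i, α i + n + 1) :=
    div_nonneg (mul_nonneg
      (Finset.prod_nonneg fun i _ => (Gamma_pos_of_pos (by linarith [hα i])).le)
      (rpow_nonneg ht.le _)) (Gamma_pos_of_pos (by linarith)).le
  rw [← toReal_ofReal hRHS, ← lintegral_gapProduct_orderedSimplex n α hα ht]
  exact integral_eq_lintegral_of_nonneg_ae
    (ae_restrict_of_forall_mem (measurableSet_orderedSimplex n t) fun _ hr =>
      gapProduct_nonneg α hr)
    (measurable_gapProduct α t).aestronglyMeasurable

theorem stmt_1 (n : ℕ) (hn : 1 ≤ n) (α : Fin n → ℝ) (hα : ∀ i, -1 < α i)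
    (t : ℝ) (ht : 0 < t) :
    (∫ r : Fin n → ℝ in
        {r | (∀ i, 0 < r i) ∧ StrictMono r ∧ ∀ i, r i < t},
        ∏ i : Fin n,
          ((if h : (i : ℕ) + 1 < n then r ⟨(i : ℕ) + 1, h⟩ else t) - r i) ^ α i) =
      (∏ i : Fin n, Real.Gamma (α i + 1)) * t ^ (∑ i, α i + n) /
        Real.Gamma (∑ i, α i + n + 1) :=
  stmt_1_general n α hα t ht
end

section
/- For every a > 0 there exist constants C₁ > 0 and C₂ > 0, depending only on a, such that for all x > 0 one has ∑_{n=0}^∞ xⁿ / (n!)^a ≤ C₁ · exp( C₂ · x^{1/a} ). -/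
/-!
With `y = (2x)^(1/a)` the `n`-th term is `2⁻ⁿ (yⁿ / n!)^a`, and `yⁿ / n! ≤ e^y`. So the series is
dominated by the geometric series `∑ 2⁻ⁿ e^(a y) = 2 e^(a 2^(1/a) x^(1/a))`.
-/

open Real Nat

theorem pow_div_factorial_rpow_eq {a x : ℝ} (ha : a ≠ 0) (hx : 0 ≤ x) (n : ℕ) :
    x ^ n / (n ! : ℝ) ^ a = ((x ^ (1 / a)) ^ n / n !) ^ a := by
  rw [div_rpow (by positivity) (by positivity), ← rpow_pow_comm (by positivity), one_div,
    rpow_inv_rpow hx ha]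

theorem pow_div_factorial_rpow_le_exp {a x : ℝ} (ha : 0 < a) (hx : 0 ≤ x) (n : ℕ) :
    x ^ n / (n ! : ℝ) ^ a ≤ exp (a * x ^ (1 / a)) := by
  rw [pow_div_factorial_rpow_eq ha.ne' hx, mul_comm, exp_mul]
  exact rpow_le_rpow (by positivity) (pow_div_factorial_le_exp _ (by positivity) n) ha.le

theorem stmt_3 (a : ℝ) (ha : 0 < a) :
    ∃ C₁ C₂ : ℝ, 0 < C₁ ∧ 0 < C₂ ∧ ∀ x : ℝ, 0 < x →
      (∑' n : ℕ, x ^ n / (Nat.factorial n : ℝ) ^ a) ≤ C₁ * Real.exp (C₂ * x ^ (1 / a)) := by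
  refine ⟨2, a * 2 ^ (1 / a), two_pos, by positivity, fun x hx => ?_⟩
  set M := exp (a * (2 * x) ^ (1 / a)) with hM
  have hterm (n : ℕ) : x ^ n / (n ! : ℝ) ^ a ≤ (1 / 2) ^ n * M :=
    calc x ^ n / (n ! : ℝ) ^ a = (1 / 2) ^ n * ((2 * x) ^ n / (n ! : ℝ) ^ a) := by
          rw [mul_pow, ← mul_div_assoc, ← mul_assoc, ← mul_pow]; norm_num
      _ ≤ (1 / 2) ^ n * M := by
          gcongr; exact pow_div_factorial_rpow_le_exp ha (by positivity) n
  have hgeom : HasSum (fun n : ℕ => (1 / 2 : ℝ) ^ n * M) (2 * M) := by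
    have := (hasSum_geometric_of_lt_one (r := (1 / 2 : ℝ)) (by norm_num) (by norm_num)).mul_right M
    rwa [show (1 - 1 / 2 : ℝ)⁻¹ = 2 by norm_num] at this
  calc ∑' n : ℕ, x ^ n / (n ! : ℝ) ^ a
      ≤ ∑' n : ℕ, (1 / 2 : ℝ) ^ n * M :=
        Summable.tsum_le_tsum hterm
          (hgeom.summable.of_nonneg_of_le (fun n => by positivity) hterm) hgeom.summable
    _ = 2 * exp (a * 2 ^ (1 / a) * x ^ (1 / a)) := by
        rw [hgeom.tsum_eq, hM, mul_rpow zero_le_two hx.le, mul_assoc]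
end

section
/- For every a > 0 there exist constants c₁ > 0 and c₂ > 0, depending only on a, such that for all x > 0 one has c₁ · exp( c₂ · x^{1/a} ) ≤ ∑_{n=0}^∞ xⁿ / (n!)^a. -/
open Real Filter

theorem stmt_4 (a : ℝ) (ha : 0 < a) :
    ∃ c₁ c₂ : ℝ, 0 < c₁ ∧ 0 < c₂ ∧ ∀ x : ℝ, 0 < x →
      c₁ * Real.exp (c₂ * x ^ (1 / a)) ≤ ∑' n : ℕ, x ^ n / (Nat.factorial n : ℝ) ^ a := by
  refine ⟨(2:ℝ) ^ (-a), a * Real.log 2 / 2, Real.rpow_pos_of_pos two_pos _,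
    by positivity, ?_⟩
  intro x hx
  set y : ℝ := x ^ (1/a) with hy
  have hy0 : 0 < y := Real.rpow_pos_of_pos hx _
  set f : ℕ → ℝ := fun n => x ^ n / (Nat.factorial n : ℝ) ^ a with hf
  have hfpos : ∀ n, 0 < f n := fun n =>
    div_pos (pow_pos hx n) (Real.rpow_pos_of_pos (by exact_mod_cast n.factorial_pos) a)
  have hsum : Summable f := by
    apply summable_of_ratio_test_tendsto_lt_one (l := 0) one_pos
      (Eventually.of_forall fun n => (hfpos n).ne')
    have hratio : ∀ n : ℕ, ‖f (n+1)‖ / ‖f n‖ = x * (((n:ℝ)+1) ^ a)⁻¹ := by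
      intro n
      have h1 : (0:ℝ) < (n.factorial : ℝ) := by exact_mod_cast n.factorial_pos
      have h2 : (0:ℝ) < ((n:ℝ)+1) := by positivity
      rw [Real.norm_of_nonneg (hfpos _).le, Real.norm_of_nonneg (hfpos _).le]
      simp only [hf]
      rw [Nat.factorial_succ]
      push_cast
      rw [Real.mul_rpow h2.le h1.le]
      field_simp
      ring
    simp only [hratio]
    have : Tendsto (fun n : ℕ => ((n:ℝ)+1) ^ a) atTop atTop :=
      (tendsto_rpow_atTop ha).comp
        (tendsto_atTop_add_const_right _ 1 tendsto_natCast_atTop_atTop)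
    have := this.inv_tendsto_atTop.const_mul x
    simpa using this
  set n : ℕ := ⌊y/2⌋₊ with hn
  have hfle : f n ≤ ∑' m, f m := Summable.le_tsum hsum n (fun m _ => (hfpos m).le)
  refine le_trans ?_ hfle
  -- key facts
  have h2n : 2 * (n:ℝ) ≤ y := by
    have := Nat.floor_le (by positivity : (0:ℝ) ≤ y/2)
    linarith [this]
  have hn1 : y/2 - 1 < (n:ℝ) := by
    have := Nat.lt_floor_add_one (y/2)
    linarith
  have hfacpos : (0:ℝ) < (n.factorial : ℝ) := by exact_mod_cast n.factorial_pos
  -- 2^n ≤ y^n / n!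
  have key1 : (2:ℝ)^n ≤ y^n / (n.factorial : ℝ) := by
    rw [le_div_iff₀ hfacpos]
    calc (2:ℝ)^n * (n.factorial : ℝ) ≤ (2:ℝ)^n * (n:ℝ)^n := by
          gcongr
          exact_mod_cast Nat.factorial_le_pow n
      _ = (2*(n:ℝ))^n := by rw [mul_pow]
      _ ≤ y^n := by
          apply pow_le_pow_left₀ (by positivity) h2n
  -- 2^(y/2-1) ≤ 2^(n:ℝ)
  have key2 : (2:ℝ) ^ (y/2 - 1) ≤ (2:ℝ) ^ (n:ℝ) :=
    Real.rpow_le_rpow_of_exponent_le one_le_two hn1.le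
  -- f n = (y^n / n!)^a
  have hfn : f n = (y^n / (n.factorial : ℝ)) ^ a := by
    rw [Real.div_rpow (by positivity) hfacpos.le]
    congr 1
    rw [← Real.rpow_natCast y n, hy, ← Real.rpow_mul hx.le, ← Real.rpow_mul hx.le]
    rw [show 1/a * (n:ℝ) * a = (n:ℝ) by field_simp]
    rw [Real.rpow_natCast]
  rw [hfn]
  calc (2:ℝ)^(-a) * Real.exp (a * Real.log 2 / 2 * y)
      = ((2:ℝ) ^ (y/2 - 1)) ^ a := by
        rw [← Real.rpow_mul (by norm_num : (0:ℝ) ≤ 2)]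
        rw [show (y/2 - 1) * a = a * y / 2 + (-a) by ring]
        rw [Real.rpow_add two_pos]
        rw [Real.rpow_def_of_pos two_pos (a * y / 2)]
        rw [show Real.log 2 * (a * y / 2) = a * Real.log 2 / 2 * y by ring]
        ring
    _ ≤ ((2:ℝ) ^ (n:ℝ)) ^ a := by
        apply Real.rpow_le_rpow (by positivity) key2 ha.le
    _ = ((2:ℝ)^n : ℝ) ^ a := by rw [Real.rpow_natCast]
    _ ≤ (y^n / (n.factorial : ℝ)) ^ a :=
        Real.rpow_le_rpow (by positivity) key1 ha.le
end

section
/- Let H ∈ (0,1) and set C_H = Γ(2H+1) · sin(πH) / (2π). Then for all r > 0 and s > 0, C_H · ∫_ℝ sin(r|η|) · sin(s|η|) · |η|^{-1-2H} dη = (1/4) · ( (r+s)^{2H} − |r−s|^{2H} ). -/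
/-!
By product-to-sum and scaling, the integral is `((r + s) ^ (2H) - |r - s| ^ (2H)) K` with
`K = ∫₀^∞ (1 - cos u) u ^ (-1 - 2H) du`. To evaluate `K`, write
`Γ(2H + 1) u ^ (-1 - 2H) = ∫₀^∞ t ^ (2H) e ^ (-tu) dt` and swap the integrals: the Laplace
transform of `1 - cos` is `1 / (t (1 + t²))`, so `Γ(2H + 1) K = ∫₀^∞ t ^ (2H - 1) / (1 + t²) dt`.
Writing `1 / (1 + t²) = ∫₀^∞ e ^ (-(1 + t²) v) dv` and swapping once more turns this into
`Γ(H) Γ(1 - H) / 2 = π / (2 sin (π H))`. All integrands are nonnegative, so each swap is Tonelli's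
theorem, which also yields the integrability of both marginals.
-/

open MeasureTheory Real Set Filter

theorem integrable_uncurry_of_nonneg {α β : Type*} [MeasurableSpace α] [MeasurableSpace β]
    {μ : Measure α} {ν : Measure β} [SFinite μ] [SFinite ν] {f : α → β → ℝ}
    (hf : AEStronglyMeasurable (Function.uncurry f) (μ.prod ν))
    (hf_nonneg : ∀ᵐ x ∂μ, ∀ᵐ y ∂ν, 0 ≤ f x y) (hf_slice : ∀ᵐ x ∂μ, Integrable (f x) ν)
    (hf_int : Integrable (fun x ↦ ∫ y, f x y ∂ν) μ) :
    Integrable (Function.uncurry f) (μ.prod ν) := by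
  refine (integrable_prod_iff hf).2 ⟨hf_slice, hf_int.congr ?_⟩
  filter_upwards [hf_nonneg] with x hx
  exact integral_congr_ae (hx.mono fun y hy ↦ (Real.norm_of_nonneg hy).symm)

theorem integrableOn_exp_neg_mul_mul_one_sub_cos {t : ℝ} (ht : 0 < t) :
    IntegrableOn (fun u ↦ exp (-(t * u)) * (1 - cos u)) (Ioi 0) := by
  refine ((exp_neg_integrableOn_Ioi 0 ht).const_mul 2).mono' (by fun_prop) ?_
  filter_upwards with u
  rw [norm_mul, Real.norm_of_nonneg (exp_pos _).le, mul_comm, neg_mul]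
  gcongr
  exact (abs_le.2 ⟨by linarith [cos_le_one u], by linarith [neg_one_le_cos u]⟩)

theorem integral_exp_neg_mul_mul_one_sub_cos {t : ℝ} (ht : 0 < t) :
    ∫ u in Ioi (0 : ℝ), exp (-(t * u)) * (1 - cos u) = 1 / (t * (1 + t ^ 2)) := by
  have h1t : 0 < 1 + t ^ 2 := by positivity
  set F : ℝ → ℝ := fun u ↦
    exp (-(t * u)) * ((t * cos u - sin u) / (1 + t ^ 2) - 1 / t) with hF
  have hF_deriv (u : ℝ) : HasDerivAt F (exp (-(t * u)) * (1 - cos u)) u := by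
    have hE : HasDerivAt (fun u ↦ exp (-(t * u))) (-t * exp (-(t * u))) u := by
      simpa [mul_comm] using ((hasDerivAt_id u).const_mul t).neg.exp
    refine (hE.mul ((((hasDerivAt_cos u).const_mul t).sub (hasDerivAt_sin u)).div_const
      (1 + t ^ 2) |>.sub_const (1 / t))).congr_deriv ?_
    simp only [Pi.sub_apply]
    field_simp
    ring
  have hF_lim : Tendsto F atTop (nhds 0) := by
    have hexp : Tendsto (fun u ↦ exp (-(t * u))) atTop (nhds 0) :=
      tendsto_exp_neg_atTop_nhds_zero.comp (tendsto_id.const_mul_atTop ht)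
    refine squeeze_zero_norm (a := fun u ↦ exp (-(t * u)) * ((t + 1) / (1 + t ^ 2) + 1 / t))
      (fun u ↦ ?_) (by simpa using hexp.mul_const _)
    rw [hF, norm_mul, Real.norm_of_nonneg (exp_pos _).le]
    gcongr
    refine (norm_sub_le _ _).trans ?_
    rw [norm_div, Real.norm_of_nonneg h1t.le, Real.norm_of_nonneg (by positivity : 0 ≤ 1 / t)]
    gcongr
    refine (norm_sub_le _ _).trans ?_
    rw [norm_mul, Real.norm_of_nonneg ht.le]
    gcongr
    · nlinarith [abs_cos_le_one u, Real.norm_eq_abs (cos u)]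
    · exact abs_sin_le_one u
  rw [integral_Ioi_of_hasDerivAt_of_tendsto' (fun u _ ↦ hF_deriv u)
    (integrableOn_exp_neg_mul_mul_one_sub_cos ht) hF_lim, hF]
  simp only [mul_zero, neg_zero, exp_zero, cos_zero, sin_zero]
  field_simp
  ring

theorem integral_const_mul_exp_neg_mul_Ioi (a : ℝ) {c : ℝ} (hc : 0 < c) :
    ∫ v in Ioi (0 : ℝ), a * exp (-(c * v)) = a / c := by
  have h := integral_rpow_mul_exp_neg_mul_Ioi one_pos hc
  simp only [sub_self, rpow_zero, one_mul, rpow_one, Gamma_one, mul_one] at h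
  rw [integral_const_mul, h, mul_one_div]

theorem integral_rpow_mul_exp_neg_one_add_sq_mul {p v : ℝ} (hp : 0 < p) (hv : 0 < v) :
    ∫ t in Ioi (0 : ℝ), t ^ (2 * p - 1) * exp (-((1 + t ^ 2) * v)) =
      exp (-v) * v ^ (-p) * (Gamma p / 2) := by
  have h := integral_rpow_mul_exp_neg_mul_rpow two_pos (by linarith : -1 < 2 * p - 1) hv
  rw [show (2 * p - 1 + 1) / 2 = p by ring, show -(2 * p - 1 + 1) / 2 = -p by ring] at h
  simp_rw [rpow_two] at h
  simp_rw [show ∀ t : ℝ, -((1 + t ^ 2) * v) = -v + -v * t ^ 2 by intro t; ring, exp_add,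
    mul_left_comm _ (exp (-v)), integral_const_mul, h]
  ring

theorem integrable_rpow_mul_exp_neg_one_add_sq_mul {p : ℝ} (hp : p ∈ Ioo (0 : ℝ) 1) :
    Integrable (Function.uncurry fun v t : ℝ ↦ t ^ (2 * p - 1) * exp (-((1 + t ^ 2) * v)))
      ((volume.restrict (Ioi 0)).prod (volume.restrict (Ioi 0))) := by
  obtain ⟨hp0, hp1⟩ := hp
  refine integrable_uncurry_of_nonneg (by fun_prop) ?_ ?_ ?_
  · filter_upwards [ae_restrict_mem measurableSet_Ioi] with v _
    filter_upwards [ae_restrict_mem measurableSet_Ioi] with t ht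
    exact mul_nonneg (rpow_nonneg (le_of_lt ht) _) (exp_pos _).le
  · filter_upwards [ae_restrict_mem measurableSet_Ioi] with v hv
    refine IntegrableOn.congr_fun ((integrableOn_rpow_mul_exp_neg_mul_sq hv
      (by linarith : -1 < 2 * p - 1)).const_mul (exp (-v))) (fun t _ ↦ ?_) measurableSet_Ioi
    rw [show -((1 + t ^ 2) * v) = -v + -v * t ^ 2 by ring, exp_add]
    ring
  · refine ((GammaIntegral_convergent (by linarith : 0 < 1 - p)).mul_const (Gamma p / 2)).congr ?_
    filter_upwards [ae_restrict_mem measurableSet_Ioi] with v hv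
    rw [integral_rpow_mul_exp_neg_one_add_sq_mul hp0 hv, sub_sub_cancel_left]

theorem integrableOn_rpow_div_one_add_sq {p : ℝ} (hp : p ∈ Ioo (0 : ℝ) 1) :
    IntegrableOn (fun t : ℝ ↦ t ^ (2 * p - 1) / (1 + t ^ 2)) (Ioi 0) := by
  refine (integrable_rpow_mul_exp_neg_one_add_sq_mul hp).integral_prod_right.congr
    (Eventually.of_forall fun t ↦ ?_)
  exact integral_const_mul_exp_neg_mul_Ioi (t ^ (2 * p - 1)) (by positivity : 0 < 1 + t ^ 2)

theorem integral_rpow_div_one_add_sq {p : ℝ} (hp : p ∈ Ioo (0 : ℝ) 1) :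
    ∫ t in Ioi (0 : ℝ), t ^ (2 * p - 1) / (1 + t ^ 2) = π / (2 * sin (π * p)) := by
  calc ∫ t in Ioi (0 : ℝ), t ^ (2 * p - 1) / (1 + t ^ 2)
      = ∫ t in Ioi (0 : ℝ), ∫ v in Ioi (0 : ℝ), t ^ (2 * p - 1) * exp (-((1 + t ^ 2) * v)) := by
        refine setIntegral_congr_fun measurableSet_Ioi fun t _ ↦ ?_
        exact (integral_const_mul_exp_neg_mul_Ioi _ (by positivity)).symm
    _ = ∫ v in Ioi (0 : ℝ), exp (-v) * v ^ ((1 - p) - 1) * (Gamma p / 2) := by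
        rw [← integral_integral_swap (integrable_rpow_mul_exp_neg_one_add_sq_mul hp)]
        refine setIntegral_congr_fun measurableSet_Ioi fun v hv ↦ ?_
        rw [integral_rpow_mul_exp_neg_one_add_sq_mul hp.1 hv, sub_sub_cancel_left]
    _ = π / (2 * sin (π * p)) := by
        rw [integral_mul_const, ← Gamma_eq_integral (by linarith [hp.2]), mul_div, mul_comm,
          Gamma_mul_Gamma_one_sub, div_div, mul_comm]

theorem setIntegral_rpow_mul_exp_neg_mul_one_sub_cos_right (H : ℝ) {t : ℝ} (ht : 0 < t) :
    ∫ u in Ioi (0 : ℝ), t ^ (2 * H) * (exp (-(t * u)) * (1 - cos u)) =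
      t ^ (2 * H - 1) / (1 + t ^ 2) := by
  rw [integral_const_mul, integral_exp_neg_mul_mul_one_sub_cos ht, rpow_sub ht, rpow_one]
  field_simp

theorem setIntegral_rpow_mul_exp_neg_mul_one_sub_cos_left {H : ℝ} (hH : 0 < 2 * H + 1) {u : ℝ}
    (hu : 0 < u) :
    ∫ t in Ioi (0 : ℝ), t ^ (2 * H) * (exp (-(t * u)) * (1 - cos u)) =
      Gamma (2 * H + 1) * ((1 - cos u) * u ^ (-1 - 2 * H)) := by
  have h := integral_rpow_mul_exp_neg_mul_Ioi hH hu
  rw [add_sub_cancel_right, one_div, inv_rpow hu.le, ← rpow_neg hu.le, neg_add'] at h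
  simp_rw [← mul_assoc, mul_comm _ u, integral_mul_const, h]
  ring_nf

theorem integrable_rpow_mul_exp_neg_mul_one_sub_cos {H : ℝ} (hH : H ∈ Ioo (0 : ℝ) 1) :
    Integrable (Function.uncurry fun t u : ℝ ↦ t ^ (2 * H) * (exp (-(t * u)) * (1 - cos u)))
      ((volume.restrict (Ioi 0)).prod (volume.restrict (Ioi 0))) := by
  refine integrable_uncurry_of_nonneg (by fun_prop) ?_ ?_ ?_
  · filter_upwards [ae_restrict_mem measurableSet_Ioi] with t ht
    refine Eventually.of_forall fun u ↦ ?_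
    have := cos_le_one u
    exact mul_nonneg (rpow_nonneg (le_of_lt ht) _) (mul_nonneg (exp_pos _).le (by linarith))
  · filter_upwards [ae_restrict_mem measurableSet_Ioi] with t ht
    exact (integrableOn_exp_neg_mul_mul_one_sub_cos ht).const_mul _
  · refine (integrableOn_rpow_div_one_add_sq hH).congr ?_
    filter_upwards [ae_restrict_mem measurableSet_Ioi] with t ht
    exact (setIntegral_rpow_mul_exp_neg_mul_one_sub_cos_right H ht).symm

theorem integrableOn_one_sub_cos_mul_rpow {H : ℝ} (hH : H ∈ Ioo (0 : ℝ) 1) :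
    IntegrableOn (fun u : ℝ ↦ (1 - cos u) * u ^ (-1 - 2 * H)) (Ioi 0) := by
  have h2H : 0 < 2 * H + 1 := by linarith [hH.1]
  have hΓ : Gamma (2 * H + 1) ≠ 0 := (Gamma_pos_of_pos h2H).ne'
  refine ((integrable_rpow_mul_exp_neg_mul_one_sub_cos hH).integral_prod_right.const_mul
    (Gamma (2 * H + 1))⁻¹).congr ?_
  filter_upwards [ae_restrict_mem measurableSet_Ioi] with u hu
  simp only [Function.uncurry_apply_pair]
  rw [setIntegral_rpow_mul_exp_neg_mul_one_sub_cos_left h2H hu, inv_mul_cancel_left₀ hΓ]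

theorem integral_one_sub_cos_mul_rpow {H : ℝ} (hH : H ∈ Ioo (0 : ℝ) 1) :
    ∫ u in Ioi (0 : ℝ), (1 - cos u) * u ^ (-1 - 2 * H) =
      π / (2 * Gamma (2 * H + 1) * sin (π * H)) := by
  have h2H : 0 < 2 * H + 1 := by linarith [hH.1]
  have hΓ : Gamma (2 * H + 1) ≠ 0 := (Gamma_pos_of_pos h2H).ne'
  calc ∫ u in Ioi (0 : ℝ), (1 - cos u) * u ^ (-1 - 2 * H)
      = (Gamma (2 * H + 1))⁻¹ * ∫ u in Ioi (0 : ℝ), ∫ t in Ioi (0 : ℝ),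
          t ^ (2 * H) * (exp (-(t * u)) * (1 - cos u)) := by
        rw [← integral_const_mul]
        refine setIntegral_congr_fun measurableSet_Ioi fun u hu ↦ ?_
        rw [setIntegral_rpow_mul_exp_neg_mul_one_sub_cos_left h2H hu, inv_mul_cancel_left₀ hΓ]
    _ = (Gamma (2 * H + 1))⁻¹ * ∫ t in Ioi (0 : ℝ), t ^ (2 * H - 1) / (1 + t ^ 2) := by
        rw [← integral_integral_swap (integrable_rpow_mul_exp_neg_mul_one_sub_cos hH)]
        congr 1
        exact setIntegral_congr_fun measurableSet_Ioi fun t ht ↦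
          setIntegral_rpow_mul_exp_neg_mul_one_sub_cos_right H ht
    _ = π / (2 * Gamma (2 * H + 1) * sin (π * H)) := by
        rw [integral_rpow_div_one_add_sq hH]
        field_simp

theorem integral_comp_mul_left_mul_rpow_Ioi (g : ℝ → ℝ) (a : ℝ) {b : ℝ} (hb : 0 < b) :
    ∫ x in Ioi (0 : ℝ), g (b * x) * x ^ a = b ^ (-1 - a) * ∫ x in Ioi (0 : ℝ), g x * x ^ a := by
  have h := integral_comp_mul_left_Ioi (fun x ↦ g x * x ^ a) 0 hb
  rw [mul_zero, smul_eq_mul] at h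
  rw [show -1 - a = -a + -1 by ring, rpow_add hb, rpow_neg_one, mul_assoc, ← h,
    ← integral_const_mul]
  refine setIntegral_congr_fun measurableSet_Ioi fun x hx ↦ ?_
  rw [mul_rpow hb.le (le_of_lt hx), rpow_neg hb.le]
  field_simp [(rpow_pos_of_pos hb a).ne']

theorem integrableOn_comp_mul_left_mul_rpow_Ioi {g : ℝ → ℝ} {a b : ℝ} (hb : 0 < b)
    (hg : IntegrableOn (fun x ↦ g x * x ^ a) (Ioi 0)) :
    IntegrableOn (fun x ↦ g (b * x) * x ^ a) (Ioi 0) := by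
  rw [← mul_zero b, ← integrableOn_Ioi_comp_mul_left_iff _ _ hb] at hg
  refine IntegrableOn.congr_fun (hg.const_mul (b ^ (-a))) (fun x hx ↦ ?_) measurableSet_Ioi
  rw [mul_rpow hb.le (le_of_lt hx), rpow_neg hb.le]
  field_simp [(rpow_pos_of_pos hb a).ne']

theorem cos_mul_eq_cos_abs_mul {t x : ℝ} (hx : 0 ≤ x) : cos (t * x) = cos (|t| * x) := by
  rw [← abs_of_nonneg hx, ← abs_mul, cos_abs, abs_of_nonneg hx]

theorem integrableOn_one_sub_cos_mul_mul_rpow {H : ℝ} (hH : H ∈ Ioo (0 : ℝ) 1) (t : ℝ) :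
    IntegrableOn (fun x : ℝ ↦ (1 - cos (t * x)) * x ^ (-1 - 2 * H)) (Ioi 0) := by
  refine IntegrableOn.congr_fun (f := fun x : ℝ ↦ (1 - cos (|t| * x)) * x ^ (-1 - 2 * H)) ?_
    (fun x hx ↦ by rw [cos_mul_eq_cos_abs_mul (le_of_lt hx)]) measurableSet_Ioi
  rcases (abs_nonneg t).eq_or_lt with ht | ht
  · simp [← ht]
  · exact integrableOn_comp_mul_left_mul_rpow_Ioi (g := fun u ↦ 1 - cos u) ht
      (integrableOn_one_sub_cos_mul_rpow hH)

theorem integral_one_sub_cos_mul_mul_rpow {H : ℝ} (hH : 0 < H) (t : ℝ) :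
    ∫ x in Ioi (0 : ℝ), (1 - cos (t * x)) * x ^ (-1 - 2 * H) =
      |t| ^ (2 * H) * ∫ u in Ioi (0 : ℝ), (1 - cos u) * u ^ (-1 - 2 * H) := by
  rw [setIntegral_congr_fun measurableSet_Ioi fun x hx ↦ by
    rw [cos_mul_eq_cos_abs_mul (le_of_lt hx)]]
  rcases (abs_nonneg t).eq_or_lt with ht | ht
  · simp [← ht, zero_rpow (by positivity : 2 * H ≠ 0)]
  · rw [integral_comp_mul_left_mul_rpow_Ioi (fun u ↦ 1 - cos u) _ ht,
      show -1 - (-1 - 2 * H) = 2 * H by ring]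

theorem stmt_6 (H : ℝ) (hH : H ∈ Set.Ioo (0 : ℝ) 1) (r s : ℝ) (hr : 0 < r) (hs : 0 < s) :
    (Real.Gamma (2 * H + 1) * Real.sin (Real.pi * H) / (2 * Real.pi)) *
        ∫ η : ℝ, Real.sin (r * |η|) * Real.sin (s * |η|) * |η| ^ (-1 - 2 * H) =
      (1 / 4) * ((r + s) ^ (2 * H) - |r - s| ^ (2 * H)) := by
  have hΓ : 0 < Gamma (2 * H + 1) := Gamma_pos_of_pos (by linarith [hH.1])
  have hsin : 0 < sin (π * H) :=
    sin_pos_of_pos_of_lt_pi (by nlinarith [pi_pos, hH.1]) (by nlinarith [pi_pos, hH.2])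
  have hC : Gamma (2 * H + 1) * sin (π * H) / (2 * π) *
      (π / (2 * Gamma (2 * H + 1) * sin (π * H))) = 1 / 4 := by
    rw [div_mul_div_comm, div_eq_iff (by positivity)]
    ring
  have h_half : ∫ η : ℝ, sin (r * |η|) * sin (s * |η|) * |η| ^ (-1 - 2 * H) =
      (∫ x in Ioi (0 : ℝ), (1 - cos ((r + s) * x)) * x ^ (-1 - 2 * H)) -
        ∫ x in Ioi (0 : ℝ), (1 - cos ((r - s) * x)) * x ^ (-1 - 2 * H) := by
    rw [integral_comp_abs (f := fun x ↦ sin (r * x) * sin (s * x) * x ^ (-1 - 2 * H)),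
      ← integral_sub (integrableOn_one_sub_cos_mul_mul_rpow hH _)
        (integrableOn_one_sub_cos_mul_mul_rpow hH _), ← integral_const_mul]
    refine setIntegral_congr_fun measurableSet_Ioi fun x _ ↦ ?_
    simp only [add_mul, sub_mul, cos_add, cos_sub]
    ring
  rw [h_half, integral_one_sub_cos_mul_mul_rpow hH.1, integral_one_sub_cos_mul_mul_rpow hH.1,
    integral_one_sub_cos_mul_rpow hH, abs_of_pos (add_pos hr hs)]
  linear_combination ((r + s) ^ (2 * H) - |r - s| ^ (2 * H)) * hC
end

section
/- For every H ∈ (0,1) and all r > 0, s > 0, the integral ∫_ℝ sin(r|η|) · sin(s|η|) · |η|^{-1-2H} dη is strictly positive. -/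
open MeasureTheory Real Set

lemma aux_meas (c t : ℝ) :
    Measurable (fun x : ℝ => (1 - Real.cos (t * x)) * |x| ^ c) := by
  fun_prop

lemma aux_integrable {c : ℝ} (hc : c < -1) (hc2 : (-1 : ℝ) < c + 2) (t : ℝ) :
    IntegrableOn (fun x : ℝ => (1 - Real.cos (t * x)) * |x| ^ c) (Set.Ioi 0) := by
  have h1 : IntegrableOn (fun x : ℝ => (1 - Real.cos (t * x)) * |x| ^ c) (Set.Ioc 0 1) := by
    have hg : IntegrableOn (fun x : ℝ => t ^ 2 / 2 * x ^ (c + 2)) (Set.Ioc 0 1) := by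
      have := (intervalIntegral.intervalIntegrable_rpow' (a := 0) (b := 1) hc2)
      rw [intervalIntegrable_iff, Set.uIoc_of_le zero_le_one] at this
      exact this.const_mul _
    refine hg.mono' ((aux_meas c t).aestronglyMeasurable.restrict) ?_
    filter_upwards [ae_restrict_mem measurableSet_Ioc] with x hx
    have hx0 : 0 < x := hx.1
    have hcos : 1 - Real.cos (t * x) ≤ (t * x) ^ 2 / 2 := by
      nlinarith [Real.one_sub_sq_div_two_le_cos (x := t * x)]
    have hcos0 : 0 ≤ 1 - Real.cos (t * x) := by nlinarith [Real.cos_le_one (t * x)]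
    have habs : |x| = x := abs_of_pos hx0
    have hxc : (0:ℝ) ≤ x ^ c := Real.rpow_nonneg hx0.le c
    rw [Real.norm_eq_abs, abs_mul, abs_of_nonneg hcos0, habs, abs_of_nonneg hxc]
    have hsplit : x ^ (c + 2) = x ^ c * x ^ 2 := by
      rw [Real.rpow_add hx0, Real.rpow_two]
    rw [hsplit]
    nlinarith [mul_le_mul_of_nonneg_right hcos hxc, sq_nonneg (t * x), sq_nonneg x]
  have h2 : IntegrableOn (fun x : ℝ => (1 - Real.cos (t * x)) * |x| ^ c) (Set.Ioi 1) := by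
    have hg : IntegrableOn (fun x : ℝ => 2 * x ^ c) (Set.Ioi 1) :=
      (integrableOn_Ioi_rpow_of_lt hc one_pos).const_mul 2
    refine hg.mono' ((aux_meas c t).aestronglyMeasurable.restrict) ?_
    filter_upwards [ae_restrict_mem measurableSet_Ioi] with x hx
    have hx0 : (0:ℝ) < x := lt_trans one_pos hx
    have hcos0 : 0 ≤ 1 - Real.cos (t * x) := by nlinarith [Real.cos_le_one (t * x)]
    have hcos2 : 1 - Real.cos (t * x) ≤ 2 := by nlinarith [Real.neg_one_le_cos (t * x)]
    have habs : |x| = x := abs_of_pos hx0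
    have hxc : (0:ℝ) ≤ x ^ c := Real.rpow_nonneg hx0.le c
    rw [Real.norm_eq_abs, abs_mul, abs_of_nonneg hcos0, habs, abs_of_nonneg hxc]
    nlinarith
  have := h1.union h2
  rwa [Set.Ioc_union_Ioi_eq_Ioi zero_le_one] at this

theorem stmt_7 (H : ℝ) (hH : H ∈ Set.Ioo (0 : ℝ) 1) (r s : ℝ) (hr : 0 < r) (hs : 0 < s) :
    0 < ∫ η : ℝ, Real.sin (r * |η|) * Real.sin (s * |η|) * |η| ^ (-1 - 2 * H) := by
  obtain ⟨hH0, hH1⟩ := hH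
  set c : ℝ := -1 - 2 * H with hc_def
  have hc : c < -1 := by simp [hc_def]; linarith
  have hc2 : (-1:ℝ) < c + 2 := by simp [hc_def]; linarith
  set J : ℝ → ℝ := fun t => ∫ x in Set.Ioi (0:ℝ), (1 - Real.cos (t * x)) * |x| ^ c with hJ_def
  -- scaling law
  have hJscale : ∀ t : ℝ, 0 < t → J t = t ^ (2 * H) * J 1 := by
    intro t ht
    have hpt : ∀ x ∈ Set.Ioi (0:ℝ),
        (1 - Real.cos (t * x)) * |x| ^ c
          = t ^ (-c) * ((1 - Real.cos (1 * (t * x))) * |t * x| ^ c) := by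
      intro x hx
      have hx0 : (0:ℝ) < x := hx
      rw [one_mul, abs_of_pos (mul_pos ht hx0), abs_of_pos hx0,
        Real.mul_rpow ht.le hx0.le]
      have htc : t ^ (-c) * t ^ c = 1 := by
        rw [← Real.rpow_add ht, neg_add_cancel, Real.rpow_zero]
      linear_combination ((Real.cos (t * x) - 1) * x ^ c) * htc
    have : J t = ∫ x in Set.Ioi (0:ℝ),
        t ^ (-c) * ((1 - Real.cos (1 * (t * x))) * |t * x| ^ c) := by
      rw [hJ_def]
      exact setIntegral_congr_fun measurableSet_Ioi hpt
    rw [this, integral_const_mul,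
      MeasureTheory.integral_comp_mul_left_Ioi
        (fun y => (1 - Real.cos (1 * y)) * |y| ^ c) 0 ht, mul_zero]
    have : t ^ (-c) * (t⁻¹ • ∫ x in Set.Ioi (0:ℝ), (1 - Real.cos (1 * x)) * |x| ^ c)
        = (t ^ (-c) * t⁻¹) * J 1 := by
      simp only [hJ_def, smul_eq_mul]; ring
    rw [this]
    congr 1
    rw [← Real.rpow_neg_one t, ← Real.rpow_add ht]
    congr 1
    rw [hc_def]; ring
  -- positivity of J 1
  have hJ1 : 0 < J 1 := by
    rw [hJ_def]
    refine (integral_pos_iff_support_of_nonneg_ae ?_ ?_).mpr ?_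
    · refine Filter.Eventually.of_forall fun x => ?_
      have h1 := Real.cos_le_one (1 * x)
      have h2 := Real.rpow_nonneg (abs_nonneg x) c
      exact mul_nonneg (by linarith) h2
    · exact aux_integrable hc hc2 1
    · have hsub : Set.Ioo (0:ℝ) 1 ⊆ Function.support
          (fun x => (1 - Real.cos (1 * x)) * |x| ^ c) := by
        intro x hx
        have hx0 : (0:ℝ) < x := hx.1
        have hx1 : x < 1 := hx.2
        have hcos : Real.cos x < 1 := by
          have h2pi : (1:ℝ) < 2 * π := by nlinarith [Real.pi_gt_three]
          rcases lt_or_eq_of_le (Real.cos_le_one x) with h | h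
          · exact h
          · exfalso
            have := (Real.cos_eq_one_iff_of_lt_of_lt
              (by linarith : -(2*π) < x) (by linarith : x < 2*π)).mp h
            linarith
        have hpos : 0 < (1 - Real.cos (1 * x)) * |x| ^ c := by
          rw [one_mul]
          have : (0:ℝ) < |x| ^ c := Real.rpow_pos_of_pos (abs_pos.mpr hx0.ne') c
          nlinarith
        exact Function.mem_support.mpr hpos.ne'
      have hmono := measure_mono (μ := volume.restrict (Set.Ioi (0:ℝ))) hsub
      have : (volume.restrict (Set.Ioi (0:ℝ))) (Set.Ioo (0:ℝ) 1) = 1 := by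
        rw [Measure.restrict_apply' measurableSet_Ioi,
          Set.inter_eq_left.mpr (fun x hx => hx.1), Real.volume_Ioo]
        simp
      rw [this] at hmono
      exact lt_of_lt_of_le one_pos hmono
  -- reduce to half line
  have habs_red : (∫ η : ℝ, Real.sin (r * |η|) * Real.sin (s * |η|) * |η| ^ c)
      = 2 * ∫ x in Set.Ioi (0:ℝ), Real.sin (r * x) * Real.sin (s * x) * |x| ^ c := by
    rw [← integral_comp_abs
      (f := fun x => Real.sin (r * x) * Real.sin (s * x) * |x| ^ c)]
    simp_rw [abs_abs]
  -- product-to-sum identity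
  have hpt : ∀ x : ℝ, Real.sin (r * x) * Real.sin (s * x) * |x| ^ c
      = ((1 - Real.cos ((r + s) * x)) * |x| ^ c
          - (1 - Real.cos (|r - s| * x)) * |x| ^ c) / 2 := by
    intro x
    have hcabs : Real.cos (|r - s| * x) = Real.cos ((r - s) * x) := by
      rcases abs_choice (r - s) with h | h
      · rw [h]
      · rw [h, neg_mul, Real.cos_neg]
    rw [hcabs, show (r - s) * x = r * x - s * x from by ring,
      show (r + s) * x = r * x + s * x from by ring]
    have hca := Real.cos_add (r * x) (s * x)
    have hcs := Real.cos_sub (r * x) (s * x)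
    linear_combination (|x| ^ c / 2) * hca - (|x| ^ c / 2) * hcs
  have hint1 := aux_integrable hc hc2 (r + s)
  have hint2 := aux_integrable hc hc2 (|r - s|)
  have hred : (∫ x in Set.Ioi (0:ℝ), Real.sin (r * x) * Real.sin (s * x) * |x| ^ c)
      = (J (r + s) - J (|r - s|)) / 2 := by
    have : (∫ x in Set.Ioi (0:ℝ), Real.sin (r * x) * Real.sin (s * x) * |x| ^ c)
        = ∫ x in Set.Ioi (0:ℝ), ((1 - Real.cos ((r + s) * x)) * |x| ^ c
            - (1 - Real.cos (|r - s| * x)) * |x| ^ c) / 2 :=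
      setIntegral_congr_fun measurableSet_Ioi (fun x _ => hpt x)
    rw [this, integral_div, integral_sub hint1 hint2]
  -- J |r - s| value
  have hJdiff : J (|r - s|) = |r - s| ^ (2 * H) * J 1 := by
    rcases eq_or_ne r s with h | h
    · subst h
      simp only [sub_self, abs_zero]
      rw [Real.zero_rpow (by linarith : 2 * H ≠ 0), zero_mul, hJ_def]
      simp
    · exact hJscale _ (abs_pos.mpr (sub_ne_zero.mpr h))
  have hlt : |r - s| ^ (2 * H) < (r + s) ^ (2 * H) := by
    refine Real.rpow_lt_rpow (abs_nonneg _) ?_ (by linarith)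
    rw [abs_lt]; constructor <;> linarith
  rw [habs_red, hred, hJscale _ (by linarith : (0:ℝ) < r + s), hJdiff]
  nlinarith
end

section
/- Let λ ∈ [1, ∞), β ∈ [0, 1), γ ∈ [0, 1] satisfy 1 − λ < β + 2γ < 1. Then there exists a constant C > 0 depending only on λ, β, γ such that for all a > 0 and b > 0, ∫_ℝ sin²(a x) · |x|^{-2+β} · min( b |x|^λ, 2 ) dx ≤ C · a^{2γ} · b^{(1 − β − 2γ)/λ}. -/
/-!
Since `|sin y| ≤ min 1 |y| ≤ |y| ^ γ`, the integrand is at most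
`a ^ (2γ) |x| ^ p min (b |x| ^ λ) 2` with `p = -2 + β + 2γ`, and `-1 - λ < p < -1` makes this
majorant integrable both near `0` and near `∞`. Splitting at the point `r = (2 / b) ^ (1 / λ)`
where the minimum switches, its integral is an explicit multiple of `r ^ (p + 1)`, which is
`b ^ ((1 - β - 2γ) / λ)` up to a constant.
-/

open MeasureTheory Set Real

lemma integrable_comp_abs_of_integrableOn_Ioi {E : Type*} [NormedAddCommGroup E] {f : ℝ → E}
    (hf : IntegrableOn f (Ioi 0)) : Integrable fun x => f |x| := by
  have hpos : IntegrableOn (fun x => f |x|) (Ioi 0) :=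
    hf.congr_fun (fun x hx => by rw [abs_of_pos hx]) measurableSet_Ioi
  have hneg : IntegrableOn (fun x => f |x|) (Iic 0) := by
    refine (IntegrableOn.comp_neg_Iic (c := 0) ?_).congr_fun
      (fun x hx => by rw [abs_of_nonpos hx]) measurableSet_Iic
    rwa [neg_zero, integrableOn_Ici_iff_integrableOn_Ioi]
  simpa only [Iic_union_Ioi, integrableOn_univ] using hneg.union hpos

lemma abs_sin_le_abs_rpow {γ : ℝ} (hγ0 : 0 ≤ γ) (hγ1 : γ ≤ 1) (y : ℝ) :
    |sin y| ≤ |y| ^ γ := by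
  rcases le_or_gt |y| 1 with hy | hy
  · calc |sin y| ≤ |y| := abs_sin_le_abs
      _ = |y| ^ (1 : ℝ) := (rpow_one _).symm
      _ ≤ |y| ^ γ := rpow_le_rpow_of_exponent_ge' (abs_nonneg y) hy hγ0 hγ1
  · exact (abs_sin_le_one y).trans (one_le_rpow hy.le hγ0)

lemma sin_sq_le_abs_rpow {γ : ℝ} (hγ0 : 0 ≤ γ) (hγ1 : γ ≤ 1) (y : ℝ) :
    sin y ^ 2 ≤ |y| ^ (2 * γ) := by
  rw [← sq_abs, mul_comm, rpow_mul (abs_nonneg y), rpow_two]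
  exact pow_le_pow_left₀ (abs_nonneg _) (abs_sin_le_abs_rpow hγ0 hγ1 y) 2

lemma sin_sq_mul_rpow_mul_le {a x s γ m : ℝ} (ha : 0 ≤ a) (hx : x ≠ 0) (hγ0 : 0 ≤ γ)
    (hγ1 : γ ≤ 1) (hm : 0 ≤ m) :
    sin (a * x) ^ 2 * |x| ^ s * m ≤ a ^ (2 * γ) * (|x| ^ (s + 2 * γ) * m) := by
  have hsin : sin (a * x) ^ 2 ≤ a ^ (2 * γ) * |x| ^ (2 * γ) := by
    simpa only [abs_mul, abs_of_nonneg ha, mul_rpow ha (abs_nonneg x)]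
      using sin_sq_le_abs_rpow hγ0 hγ1 (a * x)
  calc sin (a * x) ^ 2 * |x| ^ s * m ≤ a ^ (2 * γ) * |x| ^ (2 * γ) * |x| ^ s * m := by gcongr
    _ = a ^ (2 * γ) * (|x| ^ (s + 2 * γ) * m) := by
      rw [rpow_add (abs_pos.2 hx)]; ring

lemma mul_rpow_le_iff_le_rpow_inv {b c lam t : ℝ} (hb : 0 < b) (hc : 0 ≤ c) (hlam : 0 < lam)
    (ht : 0 ≤ t) : b * t ^ lam ≤ c ↔ t ≤ (c / b) ^ lam⁻¹ := by
  rw [le_rpow_inv_iff_of_pos ht (div_nonneg hc hb.le) hlam, le_div_iff₀ hb, mul_comm]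

section TruncatedPower

variable {p lam b c : ℝ}

lemma rpow_mul_min_eqOn_Ioc (hb : 0 < b) (hc : 0 ≤ c) (hlam : 0 < lam) :
    EqOn (fun t => t ^ p * min (b * t ^ lam) c) (fun t => b * t ^ (p + lam))
      (Ioc 0 ((c / b) ^ lam⁻¹)) := by
  intro t ⟨ht0, htr⟩
  simp only [min_eq_left ((mul_rpow_le_iff_le_rpow_inv hb hc hlam ht0.le).2 htr), rpow_add ht0]
  ring

lemma rpow_mul_min_eqOn_Ioi (hb : 0 < b) (hc : 0 ≤ c) (hlam : 0 < lam) :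
    EqOn (fun t => t ^ p * min (b * t ^ lam) c) (fun t => c * t ^ p)
      (Ioi ((c / b) ^ lam⁻¹)) := by
  intro t (ht : _ < t)
  have hct : c < b * t ^ lam :=
    not_le.1 ((mul_rpow_le_iff_le_rpow_inv hb hc hlam
      ((rpow_nonneg (div_nonneg hc hb.le) _).trans ht.le)).not.2 (not_le.2 ht))
  simp only [min_eq_right hct.le, mul_comm]

lemma integrableOn_Ioi_rpow_mul_min (hb : 0 < b) (hc : 0 < c) (hlam : 0 < lam) (hp : p < -1)
    (hpl : -1 < p + lam) : IntegrableOn (fun t => t ^ p * min (b * t ^ lam) c) (Ioi 0) := by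
  have hr : 0 < (c / b) ^ lam⁻¹ := by positivity
  rw [← Ioc_union_Ioi_eq_Ioi hr.le]
  exact IntegrableOn.union
    (IntegrableOn.congr_fun ((intervalIntegral.intervalIntegrable_rpow' hpl).1.const_mul b)
      (rpow_mul_min_eqOn_Ioc hb hc.le hlam).symm measurableSet_Ioc)
    (IntegrableOn.congr_fun ((integrableOn_Ioi_rpow_of_lt hp hr).const_mul c)
      (rpow_mul_min_eqOn_Ioi hb hc.le hlam).symm measurableSet_Ioi)

lemma integral_Ioi_rpow_mul_min (hb : 0 < b) (hc : 0 < c) (hlam : 0 < lam) (hp : p < -1)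
    (hpl : -1 < p + lam) :
    ∫ t in Ioi 0, t ^ p * min (b * t ^ lam) c =
      (c / b) ^ ((p + 1) / lam) * (c / (p + lam + 1) - c / (p + 1)) := by
  set r := (c / b) ^ lam⁻¹
  have hr : 0 < r := by positivity
  have hint := integrableOn_Ioi_rpow_mul_min hb hc hlam hp hpl
  have hr_pow : r ^ (p + 1) = (c / b) ^ ((p + 1) / lam) := by
    rw [← rpow_mul (by positivity), inv_mul_eq_div]
  have hb_pow : b * r ^ (p + lam + 1) = c * r ^ (p + 1) := by
    rw [add_right_comm, rpow_add hr, rpow_inv_rpow (by positivity) hlam.ne']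
    field_simp
  rw [← Ioc_union_Ioi_eq_Ioi hr.le, setIntegral_union (Ioc_disjoint_Ioi le_rfl) measurableSet_Ioi
      (hint.mono_set Ioc_subset_Ioi_self) (hint.mono_set (Ioi_subset_Ioi hr.le)),
    setIntegral_congr_fun measurableSet_Ioc (rpow_mul_min_eqOn_Ioc hb hc.le hlam),
    setIntegral_congr_fun measurableSet_Ioi (rpow_mul_min_eqOn_Ioi hb hc.le hlam),
    ← intervalIntegral.integral_of_le hr.le, intervalIntegral.integral_const_mul,
    integral_rpow (Or.inl hpl), zero_rpow (by linarith), integral_const_mul,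
    integral_Ioi_rpow_of_lt hp hr, ← hr_pow, sub_zero, mul_div_assoc', hb_pow]
  ring

end TruncatedPower

theorem stmt_10_general (lam β γ : ℝ) (hlam : 1 ≤ lam)
    (hγ : γ ∈ Set.Icc (0 : ℝ) 1) (h1 : 1 - lam < β + 2 * γ) (h2 : β + 2 * γ < 1) :
    ∃ C : ℝ, 0 < C ∧ ∀ a b : ℝ, 0 < a → 0 < b →
      (∫ x : ℝ, Real.sin (a * x) ^ 2 * |x| ^ (-2 + β) * min (b * |x| ^ lam) 2) ≤
        C * a ^ (2 * γ) * b ^ ((1 - β - 2 * γ) / lam) := by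
  obtain ⟨hγ0, hγ1⟩ := hγ
  have hlam0 : 0 < lam := zero_lt_one.trans_le hlam
  set p := -2 + β + 2 * γ with hp_def
  have hp : p < -1 := by linarith
  have hpl : -1 < p + lam := by linarith
  have hpl' : 0 < p + lam + 1 := by linarith
  have hp' : p + 1 < 0 := by linarith
  refine ⟨2 * 2 ^ ((p + 1) / lam) * (2 / (p + lam + 1) - 2 / (p + 1)), ?_, fun a b ha hb => ?_⟩
  · exact mul_pos (by positivity)
      (sub_pos.2 ((div_neg_of_pos_of_neg two_pos hp').trans (by positivity)))
  have hb_pow :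
      (2 / b) ^ ((p + 1) / lam) = 2 ^ ((p + 1) / lam) * b ^ ((1 - β - 2 * γ) / lam) := by
    rw [div_rpow zero_le_two hb.le, div_eq_mul_inv, ← rpow_neg hb.le, hp_def]
    ring_nf
  calc (∫ x : ℝ, sin (a * x) ^ 2 * |x| ^ (-2 + β) * min (b * |x| ^ lam) 2)
      ≤ ∫ x : ℝ, a ^ (2 * γ) * (|x| ^ p * min (b * |x| ^ lam) 2) := by
        refine integral_mono_of_nonneg (Filter.Eventually.of_forall fun x => by positivity)
          ((integrable_comp_abs_of_integrableOn_Ioi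
            (integrableOn_Ioi_rpow_mul_min hb two_pos hlam0 hp hpl)).const_mul _) ?_
        filter_upwards [Measure.ae_ne volume 0] with x hx
        exact sin_sq_mul_rpow_mul_le ha.le hx hγ0 hγ1 (by positivity)
    _ = a ^ (2 * γ) * (2 * ∫ t in Ioi 0, t ^ p * min (b * t ^ lam) 2) := by
        rw [integral_const_mul, integral_comp_abs (f := fun t => t ^ p * min (b * t ^ lam) 2)]
    _ = _ := by
        rw [integral_Ioi_rpow_mul_min hb two_pos hlam0 hp hpl, hb_pow]
        ring

theorem stmt_10 (lam β γ : ℝ) (hlam : 1 ≤ lam) (hβ : β ∈ Set.Ico (0 : ℝ) 1)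
    (hγ : γ ∈ Set.Icc (0 : ℝ) 1) (h1 : 1 - lam < β + 2 * γ) (h2 : β + 2 * γ < 1) :
    ∃ C : ℝ, 0 < C ∧ ∀ a b : ℝ, 0 < a → 0 < b →
      (∫ x : ℝ, Real.sin (a * x) ^ 2 * |x| ^ (-2 + β) * min (b * |x| ^ lam) 2) ≤
        C * a ^ (2 * γ) * b ^ ((1 - β - 2 * γ) / lam) :=
  stmt_10_general lam β γ hlam hγ h1 h2
end

section
/- For every integer n ≥ 1 there exists a finite set A_n of multi-indices α = (α₁, …, αₙ) ∈ {0,1,2}ⁿ with cardinality 2^{n-1} such that: (i) for every α ∈ A_n one has α₁ ∈ {1,2}, αₙ ∈ {0,1}, ∑_{j=1}^{n} α_j = n, and α_j + α_{j+1} ∈ {1,2,3} for every j = 1, …, n−1; and (ii) for all nonnegative real numbers x₁, …, xₙ, x₁ · ∏_{j=2}^{n} (x_j + x_{j-1}) = ∑_{α ∈ A_n} ∏_{j=1}^{n} x_j^{α_j}. -/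
namespace S12

def E1 (n : ℕ) (α : Fin (n+1) → ℕ) : Fin (n+2) → ℕ := Fin.snoc α 1
def E2 (n : ℕ) (α : Fin (n+1) → ℕ) : Fin (n+2) → ℕ :=
  Fin.snoc (Function.update α (Fin.last n) (α (Fin.last n) + 1)) 0

lemma snoc_mk (n : ℕ) (γ : Fin (n+1) → ℕ) (c : ℕ) (j : Fin (n+2)) (h : (j:ℕ) < n+1) :
    (Fin.snoc γ c : Fin (n+2) → ℕ) j = γ ⟨(j:ℕ), h⟩ := by
  have hj : j = Fin.castSucc ⟨(j:ℕ), h⟩ := by ext; simp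
  conv_lhs => rw [hj]
  rw [Fin.snoc_castSucc]

lemma upd_apply (n : ℕ) (α : Fin (n+1) → ℕ) (j : Fin (n+1)) :
    Function.update α (Fin.last n) (α (Fin.last n) + 1) j
      = α j + (if j = Fin.last n then 1 else 0) := by
  rcases eq_or_ne j (Fin.last n) with h | h
  · subst h; simp
  · simp [Function.update_apply, h]

lemma E1_lt (n : ℕ) (α : Fin (n+1) → ℕ) (j : Fin (n+2)) (h : (j:ℕ) < n+1) :
    E1 n α j = α ⟨(j:ℕ), h⟩ := snoc_mk n α 1 j h

lemma E1_last (n : ℕ) (α : Fin (n+1) → ℕ) : E1 n α (Fin.last (n+1)) = 1 := Fin.snoc_last _ _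

lemma E2_last (n : ℕ) (α : Fin (n+1) → ℕ) : E2 n α (Fin.last (n+1)) = 0 := Fin.snoc_last _ _

lemma E2_lt (n : ℕ) (α : Fin (n+1) → ℕ) (j : Fin (n+2)) (h : (j:ℕ) < n+1) :
    E2 n α j = α ⟨(j:ℕ), h⟩ + (if (j:ℕ) = n then 1 else 0) := by
  rw [E2, snoc_mk n _ 0 j h, upd_apply]
  congr 1
  rcases eq_or_ne ((j:ℕ)) n with hc | hc
  · rw [if_pos (by ext; simpa using hc), if_pos hc]
  · rw [if_neg (by simpa [Fin.ext_iff] using hc), if_neg hc]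

lemma E1_inj (n : ℕ) : Function.Injective (E1 n) := by
  intro a b hab
  funext j
  have h1 : E1 n a (Fin.castSucc j) = a j := Fin.snoc_castSucc _ _ _
  have h2 : E1 n b (Fin.castSucc j) = b j := Fin.snoc_castSucc _ _ _
  rw [← h1, ← h2, hab]

lemma E2_inj (n : ℕ) : Function.Injective (E2 n) := by
  intro a b hab
  have key : ∀ j, Function.update a (Fin.last n) (a (Fin.last n) + 1) j
      = Function.update b (Fin.last n) (b (Fin.last n) + 1) j := by
    intro j
    have h1 : E2 n a (Fin.castSucc j) = Function.update a (Fin.last n) (a (Fin.last n) + 1) j :=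
      Fin.snoc_castSucc _ _ _
    have h2 : E2 n b (Fin.castSucc j) = Function.update b (Fin.last n) (b (Fin.last n) + 1) j :=
      Fin.snoc_castSucc _ _ _
    rw [← h1, ← h2, hab]
  have hlast : a (Fin.last n) = b (Fin.last n) := by
    have := key (Fin.last n)
    rw [Function.update_self, Function.update_self] at this
    omega
  funext j
  rcases eq_or_ne j (Fin.last n) with h | h
  · rw [h]; exact hlast
  · have := key j
    rwa [Function.update_of_ne h, Function.update_of_ne h] at this

lemma E1_sum (n : ℕ) (α : Fin (n+1) → ℕ) :
    (∑ j : Fin (n+2), E1 n α j) = (∑ j : Fin (n+1), α j) + 1 := by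
  rw [Fin.sum_univ_castSucc]
  simp [E1, Fin.snoc_castSucc, Fin.snoc_last]

lemma E2_sum (n : ℕ) (α : Fin (n+1) → ℕ) :
    (∑ j : Fin (n+2), E2 n α j) = (∑ j : Fin (n+1), α j) + 1 := by
  rw [Fin.sum_univ_castSucc]
  simp only [E2, Fin.snoc_castSucc, Fin.snoc_last, add_zero]
  rw [Finset.sum_congr rfl (fun j _ => upd_apply n α j), Finset.sum_add_distrib]
  simp

lemma E1_prod (n : ℕ) (x : Fin (n+2) → ℝ) (α : Fin (n+1) → ℕ) :
    (∏ j : Fin (n+2), x j ^ E1 n α j)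
      = (∏ j : Fin (n+1), x j.castSucc ^ α j) * x (Fin.last (n+1)) := by
  rw [Fin.prod_univ_castSucc]
  simp [E1, Fin.snoc_castSucc, Fin.snoc_last]

lemma E2_prod (n : ℕ) (x : Fin (n+2) → ℝ) (α : Fin (n+1) → ℕ) :
    (∏ j : Fin (n+2), x j ^ E2 n α j)
      = (∏ j : Fin (n+1), x j.castSucc ^ α j) * x (Fin.last n).castSucc := by
  rw [Fin.prod_univ_castSucc]
  simp only [E2, Fin.snoc_castSucc, Fin.snoc_last, pow_zero, mul_one]
  calc ∏ j : Fin (n+1), x (Fin.castSucc j) ^ (Function.update α (Fin.last n) (α (Fin.last n) + 1)) j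
      = ∏ j : Fin (n+1), (x (Fin.castSucc j) ^ α j *
          (if j = Fin.last n then x (Fin.castSucc j) else 1)) := by
        refine Finset.prod_congr rfl (fun j _ => ?_)
        rw [upd_apply]
        rcases eq_or_ne j (Fin.last n) with hc | hc
        · rw [if_pos hc, if_pos hc, pow_succ]
        · rw [if_neg hc, if_neg hc, add_zero, mul_one]
    _ = (∏ j : Fin (n+1), x (Fin.castSucc j) ^ α j) *
          ∏ j : Fin (n+1), (if j = Fin.last n then x (Fin.castSucc j) else 1) :=
        Finset.prod_mul_distrib
    _ = (∏ j : Fin (n+1), x (Fin.castSucc j) ^ α j) * x (Fin.last n).castSucc := by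
        rw [Finset.prod_ite_eq' Finset.univ (Fin.last n) (fun j => x (Fin.castSucc j))]
        simp

lemma prod_split (n : ℕ) (x : Fin (n+2) → ℝ) :
    (∏ j : Fin (n+2),
        (if h : 1 ≤ (j:ℕ) then x j + x ⟨(j:ℕ)-1, by have := j.isLt; omega⟩ else 1))
      = (∏ j : Fin (n+1),
          (if h : 1 ≤ (j:ℕ) then x j.castSucc
              + x (⟨(j:ℕ)-1, by have := j.isLt; omega⟩ : Fin (n+1)).castSucc else 1))
        * (x (Fin.last (n+1)) + x (Fin.last n).castSucc) := by
  rw [Fin.prod_univ_castSucc]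
  refine congrArg₂ (· * ·) (Finset.prod_congr rfl fun j _ => rfl) ?_
  rw [dif_pos (by simp)]
  rfl

set_option maxHeartbeats 2000000 in
lemma aux12 (n : ℕ) : ∃ A : Finset (Fin (n+1) → ℕ),
    A.card = 2 ^ n ∧
    (∀ α ∈ A, (∀ j, α j ≤ 2) ∧ α 0 ∈ ({1,2} : Set ℕ) ∧
      α (Fin.last n) ∈ ({0,1} : Set ℕ) ∧
      (∑ j, α j) = n + 1 ∧
      (∀ j : Fin (n+1), ∀ h : (j:ℕ)+1 < n+1, α j + α ⟨(j:ℕ)+1, h⟩ ∈ ({1,2,3} : Set ℕ)) ∧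
      (∀ _ : 0 < n, α ⟨n-1, by omega⟩ + α (Fin.last n) ≤ 2)) ∧
    ∀ x : Fin (n+1) → ℝ,
      x 0 * ∏ j : Fin (n+1),
          (if h : 1 ≤ (j:ℕ) then x j + x ⟨(j:ℕ)-1, by have := j.isLt; omega⟩ else 1)
        = ∑ α ∈ A, ∏ j, x j ^ α j := by
  induction n with
  | zero =>
    refine ⟨{fun _ => 1}, by simp, ?_, ?_⟩
    · intro α hα
      simp only [Finset.mem_singleton] at hα
      subst hα
      refine ⟨fun j => by norm_num, by simp, by simp, by simp, ?_, by omega⟩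
      intro j h; omega
    · intro x
      simp [Fin.prod_univ_one]
  | succ n ih =>
    classical
    obtain ⟨A, hcard, hmem, hid⟩ := ih
    have hdisj : Disjoint (A.image (E1 n)) (A.image (E2 n)) := by
      rw [Finset.disjoint_left]
      rintro β hβ1 hβ2
      obtain ⟨a, _, rfl⟩ := Finset.mem_image.mp hβ1
      obtain ⟨b, _, hb⟩ := Finset.mem_image.mp hβ2
      have h1 := E1_last n a
      rw [← hb, E2_last n b] at h1
      omega
    refine ⟨A.image (E1 n) ∪ A.image (E2 n), ?_, ?_, ?_⟩
    · rw [Finset.card_union_of_disjoint hdisj,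
        Finset.card_image_of_injective _ (E1_inj n),
        Finset.card_image_of_injective _ (E2_inj n), hcard]
      ring
    · intro β hβ
      rw [Finset.mem_union] at hβ
      rcases hβ with hβ | hβ <;> obtain ⟨α, hα, rfl⟩ := Finset.mem_image.mp hβ <;>
        obtain ⟨hb, h0, hlast, hsum, hadj, hextra⟩ := hmem α hα <;>
        simp only [Set.mem_insert_iff, Set.mem_singleton_iff] at h0 hlast ⊢
      · -- E1
        have e0 : E1 n α 0 = α 0 := E1_lt n α 0 (Nat.succ_pos n)
        have en : E1 n α ⟨n, by omega⟩ = α (Fin.last n) := E1_lt n α ⟨n, by omega⟩ (Nat.lt_succ_self n)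
        refine ⟨?_, ?_, ?_, ?_, ?_, ?_⟩
        · intro j
          rcases lt_or_ge (j:ℕ) (n+1) with h | h
          · rw [E1_lt n α j h]; exact hb _
          · have hj : j = Fin.last (n+1) := by
              have := j.isLt; ext; simp only [Fin.val_last]; omega
            rw [hj, E1_last]; omega
        · rw [e0]; exact h0
        · rw [E1_last]; omega
        · rw [E1_sum, hsum]
        · intro j h
          rcases lt_or_ge ((j:ℕ)+1) (n+1) with h' | h'
          · have e1 : E1 n α j = α ⟨(j:ℕ), by omega⟩ := E1_lt n α j (by omega)
            have e2 : E1 n α ⟨(j:ℕ)+1, h⟩ = α ⟨(j:ℕ)+1, h'⟩ := E1_lt n α ⟨(j:ℕ)+1, h⟩ h'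
            have h3 : α ⟨(j:ℕ), by omega⟩ + α ⟨(j:ℕ)+1, h'⟩ ∈ ({1,2,3} : Set ℕ) :=
              hadj ⟨(j:ℕ), by omega⟩ h'
            simp only [Set.mem_insert_iff, Set.mem_singleton_iff] at h3
            rw [e1, e2]; exact h3
          · have e1 : E1 n α j = α ⟨(j:ℕ), by omega⟩ := E1_lt n α j (by omega)
            have e2 : E1 n α ⟨(j:ℕ)+1, h⟩ = 1 := by
              have hh : (⟨(j:ℕ)+1, h⟩ : Fin (n+2)) = Fin.last (n+1) := by
                ext; simp only [Fin.val_last]; omega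
              rw [hh, E1_last]
            have e3 : α ⟨(j:ℕ), by omega⟩ = α (Fin.last n) := by
              congr 1; ext; simp only [Fin.val_last]; omega
            rw [e1, e2, e3]; omega
        · intro _
          have en' : E1 n α ⟨n+1-1, by omega⟩ = α (Fin.last n) :=
            E1_lt n α ⟨n+1-1, by omega⟩ (show n+1-1 < n+1 by omega)
          rw [en', E1_last]; omega
      · -- E2
        have e0 : E2 n α 0 = α 0 + (if (0:ℕ) = n then 1 else 0) := E2_lt n α 0 (Nat.succ_pos n)
        have en : E2 n α ⟨n, by omega⟩ = α (Fin.last n) + (if n = n then 1 else 0) :=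
          E2_lt n α ⟨n, by omega⟩ (Nat.lt_succ_self n)
        rw [if_pos rfl] at en
        refine ⟨?_, ?_, ?_, ?_, ?_, ?_⟩
        · intro j
          rcases lt_or_ge (j:ℕ) (n+1) with h | h
          · rw [E2_lt n α j h]
            have hbj := hb ⟨(j:ℕ), h⟩
            rcases eq_or_ne ((j:ℕ)) n with hc | hc
            · have e3 : α ⟨(j:ℕ), h⟩ = α (Fin.last n) := by
                congr 1; ext; simp only [Fin.val_last]; omega
              rw [if_pos hc, e3]; omega
            · rw [if_neg hc]; omega
          · have hj : j = Fin.last (n+1) := by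
              have := j.isLt; ext; simp only [Fin.val_last]; omega
            rw [hj, E2_last]; omega
        · rcases Nat.eq_zero_or_pos n with hn | hn
          · have h00 : α 0 = α (Fin.last n) := by congr 1; ext; simp [hn]
            rw [e0, if_pos hn.symm, h00]
            omega
          · rw [e0, if_neg (by omega)]
            omega
        · rw [E2_last]; omega
        · rw [E2_sum, hsum]
        · intro j h
          rcases lt_or_ge ((j:ℕ)+1) (n+1) with h' | h'
          · have e1 : E2 n α j = α ⟨(j:ℕ), by omega⟩ + (if ((j:ℕ)) = n then 1 else 0) :=
              E2_lt n α j (by omega)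
            have e2 : E2 n α ⟨(j:ℕ)+1, h⟩
                = α ⟨(j:ℕ)+1, h'⟩ + (if ((j:ℕ)+1) = n then 1 else 0) :=
              E2_lt n α ⟨(j:ℕ)+1, h⟩ h'
            have h3 : α ⟨(j:ℕ), by omega⟩ + α ⟨(j:ℕ)+1, h'⟩ ∈ ({1,2,3} : Set ℕ) :=
              hadj ⟨(j:ℕ), by omega⟩ h'
            simp only [Set.mem_insert_iff, Set.mem_singleton_iff] at h3
            rw [e1, e2, if_neg (show ¬((j:ℕ) = n) from by omega)]
            rcases eq_or_ne ((j:ℕ)+1) n with hc | hc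
            · have hex := hextra (by omega)
              have ep : α ⟨n-1, by omega⟩ = α ⟨(j:ℕ), by omega⟩ := by
                congr 1; simp only [Fin.mk.injEq]; omega
              have el : α (Fin.last n) = α ⟨(j:ℕ)+1, h'⟩ := by
                congr 1; ext; simp only [Fin.val_last]; omega
              rw [if_pos hc]
              omega
            · rw [if_neg hc]; omega
          · have e1 : E2 n α j = α ⟨(j:ℕ), by omega⟩ + (if ((j:ℕ)) = n then 1 else 0) :=
              E2_lt n α j (by omega)
            have e2 : E2 n α ⟨(j:ℕ)+1, h⟩ = 0 := by
              have hh : (⟨(j:ℕ)+1, h⟩ : Fin (n+2)) = Fin.last (n+1) := by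
                ext; simp only [Fin.val_last]; omega
              rw [hh, E2_last]
            have e3 : α ⟨(j:ℕ), by omega⟩ = α (Fin.last n) := by
              congr 1; ext; simp only [Fin.val_last]; omega
            rw [e1, e2, e3, if_pos (show (j:ℕ) = n from by omega)]
            omega
        · intro _
          have en' : E2 n α ⟨n+1-1, by omega⟩ = α (Fin.last n) + (if n = n then 1 else 0) :=
            E2_lt n α ⟨n+1-1, by omega⟩ (show n+1-1 < n+1 by omega)
          rw [if_pos rfl] at en'
          rw [en', E2_last]; omega
    · intro x
      have key : x (0 : Fin (n+1)).castSucc * ∏ j : Fin (n+1),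
            (if h : 1 ≤ (j:ℕ) then x j.castSucc
                + x (⟨(j:ℕ)-1, by have := j.isLt; omega⟩ : Fin (n+1)).castSucc else 1)
          = ∑ α ∈ A, ∏ j : Fin (n+1), x j.castSucc ^ α j := hid (fun i : Fin (n+1) => x i.castSucc)
      rw [prod_split n x,
        show (x 0 : ℝ) = x (0 : Fin (n+1)).castSucc from rfl, ← mul_assoc, key]
      rw [Finset.sum_union hdisj,
        Finset.sum_image (fun a _ b _ h => E1_inj n h),
        Finset.sum_image (fun a _ b _ h => E2_inj n h)]
      simp only [E1_prod, E2_prod]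
      rw [← Finset.sum_mul, ← Finset.sum_mul]
      ring

end S12

theorem stmt_12 (n : ℕ) (hn : 1 ≤ n) :
    ∃ A : Finset (Fin n → ℕ),
      A.card = 2 ^ (n - 1) ∧
      (∀ α ∈ A,
        (∀ j, α j ≤ 2) ∧
        α ⟨0, by omega⟩ ∈ ({1, 2} : Set ℕ) ∧
        α ⟨n - 1, by omega⟩ ∈ ({0, 1} : Set ℕ) ∧
        (∑ j, α j) = n ∧
        ∀ j : Fin n, ∀ h : (j : ℕ) + 1 < n,
          α j + α ⟨(j : ℕ) + 1, h⟩ ∈ ({1, 2, 3} : Set ℕ)) ∧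
      ∀ x : Fin n → ℝ, (∀ j, 0 ≤ x j) →
        x ⟨0, by omega⟩ *
            ∏ j : Fin n,
              (if h : 1 ≤ (j : ℕ) then
                x j + x ⟨(j : ℕ) - 1, by have := j.isLt; omega⟩ else 1) =
          ∑ α ∈ A, ∏ j : Fin n, x j ^ α j := by
  obtain ⟨m, rfl⟩ : ∃ m, n = m + 1 := ⟨n - 1, by omega⟩
  obtain ⟨A, hcard, hmem, hid⟩ := S12.aux12 m
  refine ⟨A, hcard, ?_, fun x _ => hid x⟩
  intro α hα
  obtain ⟨hb, h0, hlast, hsum, hadj, _⟩ := hmem α hα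
  exact ⟨hb, h0, hlast, hsum, hadj⟩
end
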